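/- Let f₁,…,fₙ, g₁,…,gₙ ∈ L^∞. The following statements are equivalent: (1) Σ_{i=1}^{n} H*_{fᵢ} H_{gᵢ} is a Toeplitz operator (i.e. equals T_φ for some φ ∈ L^∞); (2) Σ_{i=1}^{n} H_{fᵢ} H*_{gᵢ} is a dual Toeplitz operator (i.e. equals T̃_φ for some φ ∈ L^∞); (3) Σ_{i=1}^{n} H*_{fᵢ} H_{gᵢ} = 0; (4) Σ_{i=1}^{n} H_{fᵢ} H*_{gᵢ} = 0; (5) Σ_{i=1}^{n} (fᵢ)₋ ⊗ (gᵢ)₋ = 0. -/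

import Mathlib

noncomputable section

open MeasureTheory Complex ComplexConjugate InnerProductSpace ContinuousLinearMap

namespace GSIO

instance : Fact (0 < 2 * Real.pi) := ⟨by positivity⟩

/-- The circle, modeled as `ℝ / 2πℤ`. -/
abbrev Circ : Type := AddCircle (2 * Real.pi)

/-- Normalized Haar (arc-length) measure on the circle. -/
abbrev μC : Measure Circ := AddCircle.haarAddCircle

/-- `L²` of the circle. -/
abbrev L2 : Type := Lp ℂ 2 μC

/-- `L^∞` of the circle. -/
abbrev Linf : Type := Lp ℂ ⊤ μC

/-- The Hardy space `H²`: those `L²` functions whose negative Fourier coefficients vanish. -/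
def Hardy : Submodule ℂ L2 where
  carrier := {f : L2 | ∀ n : ℤ, n < 0 → fourierCoeff (f : Circ → ℂ) n = 0}
  zero_mem' := by
    intro n hn
    rw [← fourierBasis_repr]
    simp
  add_mem' := by
    intro a b ha hb n hn
    have ha' := ha n hn
    have hb' := hb n hn
    rw [← fourierBasis_repr] at ha' hb' ⊢
    rw [map_add, lp.coeFn_add, Pi.add_apply, ha', hb', add_zero]
  smul_mem' := by
    intro c a ha n hn
    have ha' := ha n hn
    rw [← fourierBasis_repr] at ha' ⊢
    rw [_root_.map_smul, lp.coeFn_smul, Pi.smul_apply, ha', smul_zero]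

theorem isClosed_Hardy : IsClosed (Hardy : Set L2) := by
  have h : (Hardy : Set L2) =
      ⋂ n : {m : ℤ // m < 0}, (fun f : L2 =>
        (innerSL ℂ (fourierBasis (T := 2 * Real.pi) n.1)) f) ⁻¹' {0} := by
    ext f
    simp only [Set.mem_iInter, Set.mem_preimage, Set.mem_singleton_iff, SetLike.mem_coe]
    constructor
    · intro hf n
      have h1 := hf n.1 n.2
      rw [← fourierBasis_repr, fourierBasis.repr_apply_apply] at h1
      simpa using h1
    · intro hf n hn
      have h1 := hf ⟨n, hn⟩
      rw [← fourierBasis_repr, fourierBasis.repr_apply_apply]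
      simpa using h1
  rw [h]
  exact isClosed_iInter fun n =>
    isClosed_singleton.preimage (innerSL ℂ _).continuous

instance : CompleteSpace Hardy := isClosed_Hardy.completeSpace_coe

/-- The Riesz projection `P₊`, i.e. the orthogonal projection of `L²` onto `H²`. -/
def Pp : L2 →L[ℂ] L2 := Hardy.subtypeL.comp (Submodule.orthogonalProjectionOnto Hardy)

/-- `P₋ = I − P₊`. -/
def Pm : L2 →L[ℂ] L2 := ContinuousLinearMap.id ℂ L2 - Pp

/-- The pointwise product of an `L^∞` function with an `L²` function, as an `L²` function. -/
def mulFun (φ : Linf) (x : L2) : L2 :=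
  ((Lp.memLp x).smul (p := ⊤) (r := 2) (Lp.memLp φ)).toLp ((φ : Circ → ℂ) • (x : Circ → ℂ))

theorem mulFun_add (φ : Linf) (x y : L2) : mulFun φ (x + y) = mulFun φ x + mulFun φ y := by
  rw [mulFun, mulFun, mulFun, ← MemLp.toLp_add]
  apply MemLp.toLp_congr
  filter_upwards [Lp.coeFn_add x y] with t ht
  have ht' : ((x + y : L2) : Circ → ℂ) t = (x : Circ → ℂ) t + (y : Circ → ℂ) t := by
    simpa using ht
  simp only [Pi.mul_apply, Pi.smul_apply, Pi.add_apply, smul_eq_mul, ht']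
  ring

theorem mulFun_smul (c : ℂ) (φ : Linf) (x : L2) : mulFun φ (c • x) = c • mulFun φ x := by
  rw [mulFun, mulFun, ← MemLp.toLp_const_smul]
  apply MemLp.toLp_congr
  filter_upwards [Lp.coeFn_smul c x] with t ht
  have ht' : ((c • x : L2) : Circ → ℂ) t = c * (x : Circ → ℂ) t := by
    simpa using ht
  simp only [Pi.mul_apply, Pi.smul_apply, smul_eq_mul, ht']
  ring

theorem norm_mulFun_le (φ : Linf) (x : L2) : ‖mulFun φ x‖ ≤ ‖φ‖ * ‖x‖ := by
  rw [mulFun, Lp.norm_toLp]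
  have h := eLpNorm_smul_le_eLpNorm_top_mul_eLpNorm (μ := μC) 2
    (Lp.aestronglyMeasurable x) (φ : Circ → ℂ)
  refine le_trans (ENNReal.toReal_mono ?_ h) ?_
  · exact ENNReal.mul_ne_top (Lp.eLpNorm_ne_top φ) (Lp.eLpNorm_ne_top x)
  · rw [ENNReal.toReal_mul, Lp.norm_def, Lp.norm_def]

/-- The multiplication operator `M_φ` on `L²`, for `φ ∈ L^∞`. -/
def mul (φ : Linf) : L2 →L[ℂ] L2 :=
  LinearMap.mkContinuous
    { toFun := mulFun φ
      map_add' := mulFun_add φ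
      map_smul' := fun c x => mulFun_smul c φ x }
    ‖φ‖ (fun x => norm_mulFun_le φ x)

/-- Pointwise product in `L^∞`. -/
def mulInf (φ ψ : Linf) : Linf :=
  ((Lp.memLp ψ).smul (p := ⊤) (r := ⊤) (Lp.memLp φ)).toLp ((φ : Circ → ℂ) • (ψ : Circ → ℂ))

/-- Complex conjugation on `L^∞`. -/
def conjInf (φ : Linf) : Linf :=
  (show MemLp (fun t => star ((φ : Circ → ℂ) t)) ⊤ μC from
    ⟨continuous_star.comp_aestronglyMeasurable (Lp.aestronglyMeasurable φ), by
      rw [eLpNorm_congr_norm_ae (g := (φ : Circ → ℂ))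
        (Filter.Eventually.of_forall fun t => norm_star _)]
      exact Lp.eLpNorm_lt_top φ⟩).toLp _

/-- Complex conjugation on `L²`. -/
def conjL2 (x : L2) : L2 :=
  (show MemLp (fun t => star ((x : Circ → ℂ) t)) 2 μC from
    ⟨continuous_star.comp_aestronglyMeasurable (Lp.aestronglyMeasurable x), by
      rw [eLpNorm_congr_norm_ae (g := (x : Circ → ℂ))
        (Filter.Eventually.of_forall fun t => norm_star _)]
      exact Lp.eLpNorm_lt_top x⟩).toLp _

/-- The inclusion `L^∞ ⊆ L²` (the measure is finite). -/
def toL2 (φ : Linf) : L2 := ((Lp.memLp φ).mono_exponent le_top).toLp φ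

/-- The constant function `c` as an element of `L^∞`. -/
def constInf (c : ℂ) : Linf := (memLp_const c).toLp (fun _ => c)

/-- An `L^∞` function is constant (a.e.). -/
def IsConst (φ : Linf) : Prop := ∃ c : ℂ, φ = constInf c

/-- `φ ∈ H^∞ = L^∞ ∩ H²`: the negative Fourier coefficients of `φ` vanish. -/
def MemHinf (φ : Linf) : Prop := ∀ n : ℤ, n < 0 → fourierCoeff (φ : Circ → ℂ) n = 0

/-- The coordinate function `z` as an element of `L^∞`. -/
def zInf : Linf := fourierLp (T := 2 * Real.pi) ⊤ 1

/-- The function `z̄` as an element of `L^∞`. -/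
def zbarInf : Linf := fourierLp (T := 2 * Real.pi) ⊤ (-1)

/-- The antiunitary operator `V : h ↦ z̄ ⬝ conj h` on `L²`. -/
def Vmap (x : L2) : L2 := mul zbarInf (conjL2 x)

/-- `φ₋ = P₋ φ` for `φ ∈ L^∞`, viewed inside `L²`. -/
def mI (φ : Linf) : L2 := Pm (toL2 φ)

/-- The rank-one operator `p ⊗ q : x ↦ ⟪x, q⟫ · p` (the inner product being conjugate-linear
in `q`). -/
def rankOne {E : Type*} [NormedAddCommGroup E] [InnerProductSpace ℂ E] (p q : E) : E →L[ℂ] E :=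
  (innerSL ℂ q).smulRight p

/-- The Hilbert space direct sum `L² ⊕ L²`. -/
abbrev L2sq : Type := WithLp 2 (L2 × L2)

/-- A pair of `L²` functions, viewed as a vector in `L² ⊕ L²`. -/
def pair (x y : L2) : L2sq := (WithLp.equiv 2 (L2 × L2)).symm (x, y)

/-- Notation for the pointwise product in `L^∞`. -/
scoped infixl:70 " ⊙ " => GSIO.mulInf

/-- The Toeplitz operator `T_φ = P₊ M_φ P₊` (viewed as acting on the corner `H²` of `L²`). -/
def Toeplitz (φ : Linf) : L2 →L[ℂ] L2 := Pp ∘L mul φ ∘L Pp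

/-- The Hankel operator `H_φ = P₋ M_φ P₊ : H² → (H²)^⊥` (as a corner operator on `L²`). -/
def Hankel (φ : Linf) : L2 →L[ℂ] L2 := Pm ∘L mul φ ∘L Pp

/-- The dual Toeplitz operator `T̃_φ = P₋ M_φ P₋` on `(H²)^⊥` (as a corner operator on `L²`). -/
def dualToeplitz (φ : Linf) : L2 →L[ℂ] L2 := Pm ∘L mul φ ∘L Pm

/-- The generalized Cauchy singular integral operator with symbol `[[f, u], [g, v]]`:
`R x = P₊ f P₊ x + P₋ g P₊ x + P₊ u P₋ x + P₋ v P₋ x`. -/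
def Rop (f u g v : Linf) : L2 →L[ℂ] L2 :=
  Pp ∘L mul f ∘L Pp + Pm ∘L mul g ∘L Pp + Pp ∘L mul u ∘L Pm + Pm ∘L mul v ∘L Pm

/-- The singular integral operator `S_{f,g} = M_f P₊ + M_g P₋` on `L²`. -/
def Sop (f g : Linf) : L2 →L[ℂ] L2 := mul f ∘L Pp + mul g ∘L Pm



/-- Negation `t ↦ -t` preserves the Haar measure of the circle. -/
theorem mp_neg : MeasurePreserving (fun t : Circ => -t) μC μC :=
  Measure.measurePreserving_neg μC

/-- Composition with `t ↦ -t` on `L²`. -/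
def reflL2 : L2 →L[ℂ] L2 :=
  (Lp.compMeasurePreservingₗᵢ ℂ (fun t : Circ => -t) mp_neg).toContinuousLinearMap

/-- Composition with `t ↦ -t` on `L^∞`: for `φ ∈ L^∞`, `φ̃(z) = φ(z̄)`. -/
def reflInf (φ : Linf) : Linf := Lp.compMeasurePreserving (fun t : Circ => -t) mp_neg φ

/-- `φ* (z) = conj (φ(z̄))`. -/
def starInf (φ : Linf) : Linf := conjInf (reflInf φ)

/-- The flip operator `J : (Jh)(z) = z̄ · h(z̄)` on `L²`. -/
def Jop : L2 →L[ℂ] L2 := mul zbarInf ∘L reflL2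

/-- The Hankel operator `𝕳_φ = P₊ M_φ J` on `H²` (as a corner operator on `L²`). -/
def HankelPlus (φ : Linf) : L2 →L[ℂ] L2 := Pp ∘L mul φ ∘L Jop ∘L Pp

/-- The adjoint `H*_φ` of the Hankel operator `H_φ`. -/
def HankelAdj (φ : Linf) : L2 →L[ℂ] L2 := ContinuousLinearMap.adjoint (Hankel φ)

/-- `θ ∈ L^∞` is an inner function: `θ ∈ H^∞` and `|θ| = 1` a.e. -/
def IsInner (θ : Linf) : Prop := MemHinf θ ∧ ∀ᵐ t ∂μC, ‖(θ : Circ → ℂ) t‖ = 1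

/-- The orthogonal projection of `L²` onto `K_θ^⊥ = θH² ⊕ z̄·conj(H²)`, namely
`P₋ + M_θ P₊ M_{conj θ}`. -/
def Qproj (θ : Linf) : L2 →L[ℂ] L2 := Pm + mul θ ∘L Pp ∘L mul (conjInf θ)

/-!
In the Fourier basis `(zⁿ)` every operator in the statement is determined by the single matrix
`B(a, c) = Σᵢ f̂ᵢ(-a-1) · conj ĝᵢ(-c-1)`, which is the matrix of `Σᵢ (fᵢ)₋ ⊗ (gᵢ)₋` on the vectors
`z̄^{c+1}`. By Parseval, the `(m', m)` entry of `Σᵢ H*_{fᵢ} H_{gᵢ}` on `H²` is the diagonal series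
`Σₖ conj B(m'+k, m+k)`, and the `(z̄^{a+1}, z̄^{c+1})` entry of `Σᵢ H_{fᵢ} H*_{gᵢ}` is
`Σₖ B(a+k, c+k)`. Toeplitz and dual Toeplitz matrices are unchanged when both indices are shifted
by one, while the two diagonal series then differ by their first term; so either of (1), (2)
forces `B = 0`, and `B = 0` makes all entries of the three sums vanish.
-/

end GSIO

theorem HasSum.neg_add_one_of_forall_natCast_eq_zero {M : Type*} [AddCommMonoid M]
    [TopologicalSpace M] {f : ℤ → M} {s : M} (hf : HasSum f s) (h : ∀ n : ℕ, f n = 0) :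
    HasSum (fun k : ℕ => f (-(k + 1))) s := by
  simpa [h] using hf.nat_add_neg_add_one

theorem HasSum.natCast_of_forall_neg_add_one_eq_zero {M : Type*} [AddCommMonoid M]
    [TopologicalSpace M] {f : ℤ → M} {s : M} (hf : HasSum f s)
    (h : ∀ k : ℕ, f (-(k + 1)) = 0) : HasSum (fun n : ℕ => f n) s := by
  simpa only [h, add_zero] using hf.nat_add_neg_add_one

theorem eq_zero_of_hasSum_diagonal_of_shift_invariant {M : Type*} [AddCommGroup M]
    [TopologicalSpace M] [IsTopologicalAddGroup M] [T2Space M] {b s : ℕ → ℕ → M}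
    (hb : ∀ a c, HasSum (fun k => b (a + k) (c + k)) (s a c))
    (hs : ∀ a c, s (a + 1) (c + 1) = s a c) (a c : ℕ) : b a c = 0 := by
  have htail : HasSum (fun k => b (a + 1 + k) (c + 1 + k)) (s a c - b a c) := by
    simpa [add_assoc, add_comm 1] using (hasSum_nat_add_iff' 1).mpr (hb a c)
  have hsame : s a c = s a c - b a c := (hs a c ▸ hb (a + 1) (c + 1)).unique htail
  exact sub_eq_self.mp hsame.symm

namespace HilbertBasis

variable {ι 𝕜 E F : Type*} [RCLike 𝕜] [NormedAddCommGroup E] [InnerProductSpace 𝕜 E]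
  [NormedAddCommGroup F] [NormedSpace 𝕜 F]

theorem eq_zero_of_forall_inner_eq_zero (b : HilbertBasis ι 𝕜 E) {x : E}
    (h : ∀ i, ⟪b i, x⟫_𝕜 = 0) : x = 0 :=
  b.repr.map_eq_zero_iff.mp (lp.ext (funext fun i => by simp [b.repr_apply_apply, h]))

theorem continuousLinearMap_eq_zero (b : HilbertBasis ι 𝕜 E) {A : E →L[𝕜] F}
    (h : ∀ i, A (b i) = 0) : A = 0 :=
  ContinuousLinearMap.ext_on
    (by rw [Submodule.dense_iff_topologicalClosure_eq_top]; exact b.dense_span)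
    (by rintro _ ⟨i, rfl⟩; exact h i)

end HilbertBasis

namespace GSIO

local notation "𝐞" => (fourierBasis : HilbertBasis ℤ ℂ L2)

theorem inner_fourierBasis_eq_fourierCoeff (x : L2) (n : ℤ) :
    ⟪𝐞 n, x⟫_ℂ = fourierCoeff (x : Circ → ℂ) n := by
  rw [← fourierBasis.repr_apply_apply, fourierBasis_repr]

theorem fourierBasis_mem_Hardy {n : ℤ} (hn : 0 ≤ n) : 𝐞 n ∈ Hardy := fun m hm => by
  rw [← inner_fourierBasis_eq_fourierCoeff, orthonormal_iff_ite.mp fourierBasis.orthonormal,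
    if_neg (by omega)]

theorem fourierBasis_mem_Hardy_orthogonal {n : ℤ} (hn : n < 0) : 𝐞 n ∈ Hardyᗮ := fun y hy => by
  rw [inner_eq_zero_symm, inner_fourierBasis_eq_fourierCoeff]
  exact hy n hn

theorem Pp_fourierBasis_of_nonneg {n : ℤ} (hn : 0 ≤ n) : Pp (𝐞 n) = 𝐞 n :=
  Submodule.starProjection_eq_self_iff.mpr (fourierBasis_mem_Hardy hn)

theorem Pp_fourierBasis_of_neg {n : ℤ} (hn : n < 0) : Pp (𝐞 n) = 0 :=
  (Submodule.starProjection_apply_eq_zero_iff Hardy).mpr (fourierBasis_mem_Hardy_orthogonal hn)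

theorem Pm_fourierBasis_of_nonneg {n : ℤ} (hn : 0 ≤ n) : Pm (𝐞 n) = 0 := by
  change 𝐞 n - Pp (𝐞 n) = 0
  rw [Pp_fourierBasis_of_nonneg hn, sub_self]

theorem Pm_fourierBasis_of_neg {n : ℤ} (hn : n < 0) : Pm (𝐞 n) = 𝐞 n := by
  change 𝐞 n - Pp (𝐞 n) = 𝐞 n
  rw [Pp_fourierBasis_of_neg hn, sub_zero]

theorem inner_Pp_left (u v : L2) : ⟪Pp u, v⟫_ℂ = ⟪u, Pp v⟫_ℂ :=
  Submodule.inner_starProjection_left_eq_right Hardy u v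

theorem inner_Pm_left (u v : L2) : ⟪Pm u, v⟫_ℂ = ⟪u, Pm v⟫_ℂ := by
  change ⟪u - Pp u, v⟫_ℂ = ⟪u, v - Pp v⟫_ℂ
  rw [inner_sub_left, inner_sub_right, inner_Pp_left]

theorem mul_zero_eq_zero : mul 0 = 0 :=
  norm_le_zero_iff.mp
    ((LinearMap.mkContinuous_norm_le _ (norm_nonneg (0 : Linf)) _).trans_eq norm_zero)

theorem inner_fourierBasis_mul_fourierBasis (g : Linf) (m n : ℤ) :
    ⟪𝐞 n, mul g (𝐞 m)⟫_ℂ = fourierCoeff (g : Circ → ℂ) (n - m) := by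
  have hmul : (mul g (𝐞 m) : Circ → ℂ) =ᵐ[μC] fun t => fourier m t * (g : Circ → ℂ) t := by
    have hbasis : (𝐞 m : Circ → ℂ) =ᵐ[μC] fourier m := by
      rw [coe_fourierBasis]
      exact coeFn_fourierLp 2 m
    filter_upwards [MemLp.coeFn_toLp ((Lp.memLp (𝐞 m)).smul (p := ⊤) (r := 2) (Lp.memLp g)),
      hbasis] with t hprod ht
    simp only [mul, LinearMap.mkContinuous_apply, LinearMap.coe_mk, AddHom.coe_mk, mulFun]
    rw [hprod]
    change (g : Circ → ℂ) t * _ = _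
    rw [ht, mul_comm]
  rw [inner_fourierBasis_eq_fourierCoeff, fourierCoeff_congr_ae hmul]
  refine integral_congr_ae (Filter.Eventually.of_forall fun t => ?_)
  simp only [smul_eq_mul, ← mul_assoc, ← fourier_add]
  rw [show -n + m = -(n - m) by ring]

theorem inner_fourierBasis_toL2 (φ : Linf) (n : ℤ) :
    ⟪𝐞 n, toL2 φ⟫_ℂ = fourierCoeff (φ : Circ → ℂ) n := by
  rw [inner_fourierBasis_eq_fourierCoeff, toL2, fourierCoeff_congr_ae (MemLp.coeFn_toLp _)]

theorem rankOne_apply (p q x : L2) : rankOne p q x = ⟪q, x⟫_ℂ • p := rfl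

/-- `φ̂(-k-1)`, the coefficient of `z̄^{k+1}` in `φ`; these are the entries of the Hankel matrix
of `φ`. -/
def negCoeff (φ : Linf) (k : ℕ) : ℂ := fourierCoeff (φ : Circ → ℂ) (-(k + 1))

theorem inner_fourierBasis_mI_of_nonneg (φ : Linf) {n : ℤ} (hn : 0 ≤ n) : ⟪𝐞 n, mI φ⟫_ℂ = 0 := by
  rw [mI, ← inner_Pm_left, Pm_fourierBasis_of_nonneg hn, inner_zero_left]

theorem inner_fourierBasis_mI (φ : Linf) (k : ℕ) : ⟪𝐞 (-(k + 1)), mI φ⟫_ℂ = negCoeff φ k := by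
  rw [mI, ← inner_Pm_left, Pm_fourierBasis_of_neg (by omega), inner_fourierBasis_toL2, negCoeff]

theorem Hankel_fourierBasis_of_neg (g : Linf) {m : ℤ} (hm : m < 0) : Hankel g (𝐞 m) = 0 := by
  rw [Hankel, comp_apply, comp_apply, Pp_fourierBasis_of_neg hm, map_zero, map_zero]

theorem inner_fourierBasis_Hankel_of_nonneg (g : Linf) (x : L2) {n : ℤ} (hn : 0 ≤ n) :
    ⟪𝐞 n, Hankel g x⟫_ℂ = 0 := by
  rw [Hankel, comp_apply, ← inner_Pm_left, Pm_fourierBasis_of_nonneg hn, inner_zero_left]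

theorem inner_fourierBasis_Hankel_fourierBasis (g : Linf) (m k : ℕ) :
    ⟪𝐞 (-(k + 1)), Hankel g (𝐞 m)⟫_ℂ = negCoeff g (m + k) := by
  rw [Hankel, comp_apply, comp_apply, Pp_fourierBasis_of_nonneg (by omega), ← inner_Pm_left,
    Pm_fourierBasis_of_neg (by omega), inner_fourierBasis_mul_fourierBasis, negCoeff]
  congr 1
  push_cast
  ring

theorem HankelAdj_fourierBasis_of_nonneg (g : Linf) {n : ℤ} (hn : 0 ≤ n) :
    HankelAdj g (𝐞 n) = 0 :=
  ext_inner_right ℂ fun y => by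
    rw [HankelAdj, adjoint_inner_left, inner_fourierBasis_Hankel_of_nonneg g y hn, inner_zero_left]

theorem inner_fourierBasis_HankelAdj_of_neg (g : Linf) (x : L2) {n : ℤ} (hn : n < 0) :
    ⟪𝐞 n, HankelAdj g x⟫_ℂ = 0 := by
  rw [HankelAdj, adjoint_inner_right, Hankel_fourierBasis_of_neg g hn, inner_zero_left]

theorem inner_fourierBasis_HankelAdj_fourierBasis (g : Linf) (a k : ℕ) :
    ⟪𝐞 k, HankelAdj g (𝐞 (-(a + 1)))⟫_ℂ = conj (negCoeff g (a + k)) := by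
  rw [HankelAdj, adjoint_inner_right, ← inner_conj_symm, inner_fourierBasis_Hankel_fourierBasis,
    add_comm]

theorem hasSum_inner_Hankel_fourierBasis (f g : Linf) (a c : ℕ) :
    HasSum (fun k : ℕ => conj (negCoeff f (a + k)) * negCoeff g (c + k))
      ⟪Hankel f (𝐞 a), Hankel g (𝐞 c)⟫_ℂ := by
  have hparseval := (fourierBasis.hasSum_inner_mul_inner (Hankel f (𝐞 a)) (Hankel g (𝐞 c))
    ).neg_add_one_of_forall_natCast_eq_zero fun n => by
      rw [inner_fourierBasis_Hankel_of_nonneg g _ n.cast_nonneg, mul_zero]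
  simpa only [← inner_conj_symm (Hankel f _), inner_fourierBasis_Hankel_fourierBasis]
    using hparseval

theorem hasSum_inner_HankelAdj_fourierBasis (f g : Linf) (a c : ℕ) :
    HasSum (fun k : ℕ => negCoeff f (a + k) * conj (negCoeff g (c + k)))
      ⟪HankelAdj f (𝐞 (-(a + 1))), HankelAdj g (𝐞 (-(c + 1)))⟫_ℂ := by
  have hparseval := (fourierBasis.hasSum_inner_mul_inner (HankelAdj f (𝐞 (-(a + 1))))
    (HankelAdj g (𝐞 (-(c + 1))))).natCast_of_forall_neg_add_one_eq_zero fun k => by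
      rw [inner_fourierBasis_HankelAdj_of_neg g _ (by omega), mul_zero]
  simpa only [← inner_conj_symm (HankelAdj f _), inner_fourierBasis_HankelAdj_fourierBasis,
    Complex.conj_conj] using hparseval

theorem inner_fourierBasis_Toeplitz_fourierBasis (φ : Linf) (m n : ℕ) :
    ⟪𝐞 n, Toeplitz φ (𝐞 m)⟫_ℂ = fourierCoeff (φ : Circ → ℂ) (n - m) := by
  rw [Toeplitz, comp_apply, comp_apply, Pp_fourierBasis_of_nonneg (by omega), ← inner_Pp_left,
    Pp_fourierBasis_of_nonneg (by omega), inner_fourierBasis_mul_fourierBasis]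

theorem inner_fourierBasis_dualToeplitz_fourierBasis (φ : Linf) (a c : ℕ) :
    ⟪𝐞 (-(a + 1)), dualToeplitz φ (𝐞 (-(c + 1)))⟫_ℂ = fourierCoeff (φ : Circ → ℂ) (c - a) := by
  rw [dualToeplitz, comp_apply, comp_apply, Pm_fourierBasis_of_neg (by omega), ← inner_Pm_left,
    Pm_fourierBasis_of_neg (by omega), inner_fourierBasis_mul_fourierBasis]
  congr 1
  ring

section SumOfProducts

variable {ι : Type*} [Fintype ι] (f g : ι → Linf)

/-- The matrix of `Σᵢ (fᵢ)₋ ⊗ (gᵢ)₋` on the vectors `z̄^{c+1}`. -/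
def negPartMatrix (a c : ℕ) : ℂ := ∑ i, negCoeff (f i) a * conj (negCoeff (g i) c)

theorem inner_sum_rankOne_fourierBasis (a c : ℕ) :
    ⟪𝐞 (-(a + 1)), (∑ i, rankOne (mI (f i)) (mI (g i))) (𝐞 (-(c + 1)))⟫_ℂ =
      negPartMatrix f g a c := by
  simp only [sum_apply, inner_sum, rankOne_apply, inner_smul_right, ← inner_conj_symm (mI (g _)),
    inner_fourierBasis_mI, negPartMatrix, mul_comm]

theorem sum_rankOne_eq_zero_iff :
    ∑ i, rankOne (mI (f i)) (mI (g i)) = 0 ↔ negPartMatrix f g = 0 := by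
  refine ⟨fun h => funext₂ fun a c => ?_, fun h => ?_⟩
  · rw [← inner_sum_rankOne_fourierBasis, h, zero_apply, inner_zero_right, Pi.zero_apply,
      Pi.zero_apply]
  refine fourierBasis.continuousLinearMap_eq_zero fun m =>
    fourierBasis.eq_zero_of_forall_inner_eq_zero fun n => ?_
  rcases le_or_gt 0 m with hm | hm
  · simp only [sum_apply, rankOne_apply,
      inner_eq_zero_symm.mp (inner_fourierBasis_mI_of_nonneg _ hm), zero_smul,
      Finset.sum_const_zero, inner_zero_right]
  rcases le_or_gt 0 n with hn | hn
  · simp only [sum_apply, rankOne_apply, inner_sum, inner_smul_right,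
      inner_fourierBasis_mI_of_nonneg _ hn, mul_zero, Finset.sum_const_zero]
  obtain ⟨c, rfl⟩ : ∃ c : ℕ, m = -(c + 1) := ⟨(-m - 1).toNat, by omega⟩
  obtain ⟨a, rfl⟩ : ∃ a : ℕ, n = -(a + 1) := ⟨(-n - 1).toNat, by omega⟩
  rw [inner_sum_rankOne_fourierBasis, h, Pi.zero_apply, Pi.zero_apply]

theorem hasSum_inner_sum_hankelAdj_comp_hankel (a c : ℕ) :
    HasSum (fun k => conj (negPartMatrix f g (a + k) (c + k)))
      ⟪𝐞 a, (∑ i, HankelAdj (f i) ∘L Hankel (g i)) (𝐞 c)⟫_ℂ := by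
  simp only [sum_apply, comp_apply, inner_sum, HankelAdj, adjoint_inner_right, negPartMatrix,
    map_sum, map_mul, Complex.conj_conj]
  exact hasSum_sum fun i _ => hasSum_inner_Hankel_fourierBasis (f i) (g i) a c

theorem hasSum_inner_sum_hankel_comp_hankelAdj (a c : ℕ) :
    HasSum (fun k => negPartMatrix f g (a + k) (c + k))
      ⟪𝐞 (-(a + 1)), (∑ i, Hankel (f i) ∘L HankelAdj (g i)) (𝐞 (-(c + 1)))⟫_ℂ := by
  have hterm : ∀ i, ⟪𝐞 (-(a + 1)), (Hankel (f i) ∘L HankelAdj (g i)) (𝐞 (-(c + 1)))⟫_ℂ =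
      ⟪HankelAdj (f i) (𝐞 (-(a + 1))), HankelAdj (g i) (𝐞 (-(c + 1)))⟫_ℂ := fun i =>
    (adjoint_inner_left (Hankel (f i)) _ _).symm
  simp only [sum_apply, inner_sum, hterm, negPartMatrix]
  exact hasSum_sum fun i _ => hasSum_inner_HankelAdj_fourierBasis (f i) (g i) a c

theorem sum_hankelAdj_comp_hankel_eq_zero (h : negPartMatrix f g = 0) :
    ∑ i, HankelAdj (f i) ∘L Hankel (g i) = 0 := by
  refine fourierBasis.continuousLinearMap_eq_zero fun m =>
    fourierBasis.eq_zero_of_forall_inner_eq_zero fun n => ?_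
  rcases lt_or_ge m 0 with hm | hm
  · simp only [sum_apply, comp_apply, Hankel_fourierBasis_of_neg _ hm, map_zero,
      Finset.sum_const_zero, inner_zero_right]
  rcases lt_or_ge n 0 with hn | hn
  · simp only [sum_apply, comp_apply, inner_sum, inner_fourierBasis_HankelAdj_of_neg _ _ hn,
      Finset.sum_const_zero]
  lift m to ℕ using hm
  lift n to ℕ using hn
  have hentry := hasSum_inner_sum_hankelAdj_comp_hankel f g n m
  simp only [h, Pi.zero_apply, map_zero] at hentry
  exact hentry.unique hasSum_zero

theorem sum_hankel_comp_hankelAdj_eq_zero (h : negPartMatrix f g = 0) :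
    ∑ i, Hankel (f i) ∘L HankelAdj (g i) = 0 := by
  refine fourierBasis.continuousLinearMap_eq_zero fun m =>
    fourierBasis.eq_zero_of_forall_inner_eq_zero fun n => ?_
  rcases le_or_gt 0 m with hm | hm
  · simp only [sum_apply, comp_apply, HankelAdj_fourierBasis_of_nonneg _ hm, map_zero,
      Finset.sum_const_zero, inner_zero_right]
  rcases le_or_gt 0 n with hn | hn
  · simp only [sum_apply, comp_apply, inner_sum, inner_fourierBasis_Hankel_of_nonneg _ _ hn,
      Finset.sum_const_zero]
  obtain ⟨c, rfl⟩ : ∃ c : ℕ, m = -(c + 1) := ⟨(-m - 1).toNat, by omega⟩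
  obtain ⟨a, rfl⟩ : ∃ a : ℕ, n = -(a + 1) := ⟨(-n - 1).toNat, by omega⟩
  have hentry := hasSum_inner_sum_hankel_comp_hankelAdj f g a c
  simp only [h, Pi.zero_apply] at hentry
  exact hentry.unique hasSum_zero

theorem negPartMatrix_eq_zero_of_eq_toeplitz {φ : Linf}
    (hφ : ∑ i, HankelAdj (f i) ∘L Hankel (g i) = Toeplitz φ) : negPartMatrix f g = 0 := by
  refine funext₂ fun a c => (map_eq_zero (starRingEnd ℂ)).mp ?_
  refine eq_zero_of_hasSum_diagonal_of_shift_invariant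
    (b := fun a c => conj (negPartMatrix f g a c))
    (s := fun a c => fourierCoeff (φ : Circ → ℂ) (a - c))
    (fun a c => ?_) (fun a c => ?_) a c
  · simpa only [hφ, inner_fourierBasis_Toeplitz_fourierBasis] using
      hasSum_inner_sum_hankelAdj_comp_hankel f g a c
  · push_cast
    ring_nf

theorem negPartMatrix_eq_zero_of_eq_dualToeplitz {φ : Linf}
    (hφ : ∑ i, Hankel (f i) ∘L HankelAdj (g i) = dualToeplitz φ) : negPartMatrix f g = 0 :=
  funext₂ <| eq_zero_of_hasSum_diagonal_of_shift_invariant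
    (s := fun a c => fourierCoeff (φ : Circ → ℂ) (c - a))
    (fun a c => by
      simpa only [hφ, inner_fourierBasis_dualToeplitz_fourierBasis] using
        hasSum_inner_sum_hankel_comp_hankelAdj f g a c)
    (fun a c => by push_cast; ring_nf)

end SumOfProducts

/-- For `f₁, …, fₙ, g₁, …, gₙ ∈ L^∞` the following are equivalent:
(1) `Σᵢ H*_{fᵢ} H_{gᵢ}` is a Toeplitz operator; (2) `Σᵢ H_{fᵢ} H*_{gᵢ}` is a dual Toeplitz
operator; (3) `Σᵢ H*_{fᵢ} H_{gᵢ} = 0`; (4) `Σᵢ H_{fᵢ} H*_{gᵢ} = 0`;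
(5) `Σᵢ (fᵢ)₋ ⊗ (gᵢ)₋ = 0`. -/
theorem statement1 (n : ℕ) (f g : Fin n → Linf) :
    List.TFAE
      [∃ φ : Linf, ∑ i, HankelAdj (f i) ∘L Hankel (g i) = Toeplitz φ,
       ∃ φ : Linf, ∑ i, Hankel (f i) ∘L HankelAdj (g i) = dualToeplitz φ,
       ∑ i, HankelAdj (f i) ∘L Hankel (g i) = 0,
       ∑ i, Hankel (f i) ∘L HankelAdj (g i) = 0,
       ∑ i, rankOne (mI (f i)) (mI (g i)) = 0] := by
  tfae_have 1 → 5 := fun ⟨_, hφ⟩ =>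
    (sum_rankOne_eq_zero_iff f g).mpr (negPartMatrix_eq_zero_of_eq_toeplitz f g hφ)
  tfae_have 2 → 5 := fun ⟨_, hφ⟩ =>
    (sum_rankOne_eq_zero_iff f g).mpr (negPartMatrix_eq_zero_of_eq_dualToeplitz f g hφ)
  tfae_have 5 → 3 := fun h =>
    sum_hankelAdj_comp_hankel_eq_zero f g ((sum_rankOne_eq_zero_iff f g).mp h)
  tfae_have 5 → 4 := fun h =>
    sum_hankel_comp_hankelAdj_eq_zero f g ((sum_rankOne_eq_zero_iff f g).mp h)
  tfae_have 3 → 1 := fun h => ⟨0, by rw [h, Toeplitz, mul_zero_eq_zero, zero_comp, comp_zero]⟩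
  tfae_have 4 → 2 := fun h => ⟨0, by rw [h, dualToeplitz, mul_zero_eq_zero, zero_comp, comp_zero]⟩
  tfae_finish

end GSIO
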